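/- arXiv:1904.08973 — 2 statements merged into one kernel-verified Lean document; each statement's English description precedes it below -/
import Mathlib

section
/- Let X^Λ be the (2Λ+1)×(2Λ+1) real symmetric tridiagonal matrix with zero diagonal and off-diagonal entries b_n/2 where b_n = √(1 + n(n−1)/k) for n = Λ, Λ−1, …, 1−Λ, and k ≥ Λ²(Λ+1)². Then its largest eigenvalue α₁(Λ) satisfies cos(π/(2Λ+2)) ≤ α₁(Λ) ≤ √(1 + Λ(Λ−1)/k)·cos(π/(2Λ+2)). -/
/-!
Write `A` for the adjacency matrix of the path graph on `n = 2Λ + 1` vertices. Its Perron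
eigenvector is `wᵢ = sin ((i + 1)π/(n + 1)) > 0`, with eigenvalue `2 cos (π/(n + 1))`. Since
`1 ≤ b_m ≤ b_Λ` for all indices `m` that occur, `X^Λ` is squeezed entrywise between `A / 2` and
`b_Λ A / 2`, so `cos θ • w ≤ X^Λ w ≤ b_Λ cos θ • w` with `θ = π/(2Λ + 2)`. The left inequality
bounds the Rayleigh quotient of `X^Λ` at `w` from below, and the largest eigenvalue of a symmetric
matrix is the supremum of its Rayleigh quotient. The right inequality gives the upper bound by the
Collatz–Wielandt argument: at an index maximising `|vᵢ| / wᵢ` for an eigenvector `v`, the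
eigenvalue equation forces `|α| ≤ b_Λ cos θ`.
-/

/-- `b_m = √(1 + m(m-1)/k)`. -/
noncomputable def bcoef (k : ℝ) (m : ℤ) : ℝ := Real.sqrt (1 + (m * (m - 1)) / k)

/-- The matrix of the coordinate `x₁` on the fuzzy circle `S¹_Λ`: the
`(2Λ+1) × (2Λ+1)` symmetric tridiagonal matrix with zero diagonal and
off-diagonal entries `b_{Λ-i}/2`. -/
noncomputable def XLam (Λ : ℕ) (k : ℝ) : Matrix (Fin (2*Λ+1)) (Fin (2*Λ+1)) ℝ :=
  fun i j =>
    if (i : ℕ) + 1 = j then bcoef k ((Λ : ℤ) - (i : ℕ)) / 2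
    else if (j : ℕ) + 1 = i then bcoef k ((Λ : ℤ) - (j : ℕ)) / 2
    else 0

open Matrix Module.End Real SimpleGraph

theorem LinearMap.IsSymmetric.exists_hasEigenvalue_rayleigh_le {𝕜 E : Type*} [RCLike 𝕜]
    [NormedAddCommGroup E] [InnerProductSpace 𝕜 E] [FiniteDimensional 𝕜 E] {T : E →ₗ[𝕜] E}
    (hT : T.IsSymmetric) {x : E} (hx : x ≠ 0) :
    ∃ μ : ℝ, HasEigenvalue T μ ∧ RCLike.re (inner 𝕜 (T x) x) / ‖x‖ ^ 2 ≤ μ := by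
  have : Nontrivial E := ⟨⟨x, 0, hx⟩⟩
  refine ⟨_, hT.hasEigenvalue_iSup_of_finiteDimensional,
    le_ciSup (f := fun y : {y : E // y ≠ 0} ↦ RCLike.re (inner 𝕜 (T y) y) / ‖(y : E)‖ ^ 2) ?_
      ⟨x, hx⟩⟩
  refine ⟨‖LinearMap.toContinuousLinearMap T‖, ?_⟩
  rintro _ ⟨y, rfl⟩
  exact (le_abs_self _).trans ((LinearMap.toContinuousLinearMap T).rayleighQuotient_le_norm y)

namespace Matrix

variable {n : Type*} [Fintype n]

theorem IsHermitian.exists_hasEigenvalue_ge [DecidableEq n] {A : Matrix n n ℝ}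
    (hA : A.IsHermitian) {x : n → ℝ} (hx : x ≠ 0) :
    ∃ μ, HasEigenvalue (toLin' A) μ ∧ (A *ᵥ x ⬝ᵥ x) / (x ⬝ᵥ x) ≤ μ := by
  obtain ⟨μ, hμ, hle⟩ := (isSymmetric_toEuclideanLin_iff.mpr hA).exists_hasEigenvalue_rayleigh_le
    (x := WithLp.toLp 2 x) (by simpa using hx)
  refine ⟨μ, ?_, ?_⟩
  · rw [hasEigenvalue_iff_mem_spectrum, spectrum_toLin', ← spectrum_toLpLin 2]
    exact hasEigenvalue_iff_mem_spectrum.mp hμ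
  · have hnorm : ‖WithLp.toLp 2 x‖ ^ 2 = x ⬝ᵥ x := by
      rw [← real_inner_self_eq_norm_sq, EuclideanSpace.inner_eq_star_dotProduct]
      simp
    have hinner : inner ℝ (toEuclideanLin A (WithLp.toLp 2 x)) (WithLp.toLp 2 x) = A *ᵥ x ⬝ᵥ x := by
      rw [EuclideanSpace.inner_eq_star_dotProduct]
      simp [dotProduct_comm]
    rwa [RCLike.re_to_real, hinner, hnorm] at hle

theorem IsHermitian.exists_hasEigenvalue_ge_of_smul_le_mulVec [DecidableEq n] {A : Matrix n n ℝ}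
    (hA : A.IsHermitian) {x : n → ℝ} (hx₀ : 0 ≤ x) (hx : x ≠ 0) {c : ℝ} (hc : c • x ≤ A *ᵥ x) :
    ∃ μ, HasEigenvalue (toLin' A) μ ∧ c ≤ μ := by
  obtain ⟨μ, hμ, hle⟩ := hA.exists_hasEigenvalue_ge hx
  have hxx : 0 < x ⬝ᵥ x :=
    (dotProduct_nonneg_of_nonneg hx₀ hx₀).lt_of_ne' (dotProduct_self_eq_zero.not.mpr hx)
  refine ⟨μ, hμ, le_trans ?_ hle⟩
  rw [le_div_iff₀ hxx, ← smul_eq_mul, ← smul_dotProduct]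
  exact dotProduct_le_dotProduct_of_nonneg_right hc hx₀

theorem mulVec_le_mulVec_of_le {A B : Matrix n n ℝ} (hAB : ∀ i j, A i j ≤ B i j) {w : n → ℝ}
    (hw : 0 ≤ w) : A *ᵥ w ≤ B *ᵥ w := fun i ↦
  Finset.sum_le_sum fun j _ ↦ mul_le_mul_of_nonneg_right (hAB i j) (hw j)

theorem abs_le_of_hasEigenvalue_of_mulVec_le [DecidableEq n] {A : Matrix n n ℝ}
    (hA : ∀ i j, 0 ≤ A i j) {w : n → ℝ} (hw : ∀ i, 0 < w i) {c μ : ℝ} (hAw : A *ᵥ w ≤ c • w)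
    (hμ : HasEigenvalue (toLin' A) μ) : |μ| ≤ c := by
  obtain ⟨v, hv, hv0⟩ := hμ.exists_hasEigenvector
  rw [mem_eigenspace_iff, toLin'_apply] at hv
  obtain ⟨i₀, hi₀⟩ := Function.ne_iff.mp hv0
  obtain ⟨j, -, hj⟩ := Finset.exists_max_image Finset.univ (fun i ↦ |v i| / w i) ⟨i₀, by simp⟩
  set r := |v j| / w j
  have hrw : r * w j = |v j| := div_mul_cancel₀ _ (hw j).ne'
  have hvr : ∀ i, |v i| ≤ r * w i := fun i ↦ (div_le_iff₀ (hw i)).mp (hj i (by simp))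
  have hvj : 0 < |v j| := by
    have := (div_pos (abs_pos.mpr hi₀) (hw i₀)).trans_le (hj i₀ (by simp))
    exact (div_pos_iff_of_pos_right (hw j)).mp this
  refine le_of_mul_le_mul_right ?_ hvj
  calc |μ| * |v j| = |∑ i, A j i * v i| := by
        rw [← abs_mul, ← smul_eq_mul, ← Pi.smul_apply, ← hv]; rfl
    _ ≤ ∑ i, A j i * (r * w i) := by
        refine (Finset.abs_sum_le_sum_abs _ _).trans (Finset.sum_le_sum fun i _ ↦ ?_)
        rw [abs_mul, abs_of_nonneg (hA j i)]
        exact mul_le_mul_of_nonneg_left (hvr i) (hA j i)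
    _ = r * (A *ᵥ w) j := by
        simp only [mulVec, dotProduct, Finset.mul_sum]
        exact Finset.sum_congr rfl fun _ _ ↦ by ring
    _ ≤ r * (c * w j) := mul_le_mul_of_nonneg_left (hAw j) (div_nonneg (abs_nonneg _) (hw j).le)
    _ = c * |v j| := by rw [← hrw]; ring

end Matrix

instance SimpleGraph.pathGraph.decidableAdj (n : ℕ) : DecidableRel (pathGraph n).Adj :=
  fun _ _ ↦ decidable_of_iff' _ pathGraph_adj

theorem SimpleGraph.pathGraph_adjMatrix_mulVec_apply {α : Type*} [Semiring α] {n : ℕ}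
    (s : ℕ → α) (h₀ : s 0 = 0) (hn : s (n + 1) = 0) (j : Fin n) :
    ((pathGraph n).adjMatrix α *ᵥ fun i ↦ s (i + 1)) j = s j + s (j + 2) := by
  obtain ⟨j, hj⟩ := j
  simp only [mulVec, dotProduct, adjMatrix_apply, pathGraph_adj, ite_mul, one_mul, zero_mul]
  rw [Fin.sum_univ_eq_sum_range (fun i ↦ if j + 1 = i ∨ i + 1 = j then s (i + 1) else 0)]
  have hsplit : ∀ i, (if j + 1 = i ∨ i + 1 = j then s (i + 1) else 0) =
      (if j + 1 = i then s (j + 2) else 0) + (if i + 1 = j then s j else 0) := by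
    intro i
    split_ifs <;> subst_vars <;> first | omega | simp
  simp only [hsplit, Finset.sum_add_distrib, Finset.sum_ite_eq, Finset.mem_range]
  have hright : (if j + 1 < n then s (j + 2) else 0) = s (j + 2) := by
    split_ifs with h
    · rfl
    · rw [show j + 2 = n + 1 by omega, hn]
  rw [hright, add_comm]
  congr 1
  rcases j with _ | m
  · simp [h₀]
  · simp [show m < n by omega]

noncomputable def pathSin (n : ℕ) (i : Fin n) : ℝ := sin ((i + 1) * (π / (n + 1)))

theorem pathSin_pos {n : ℕ} (i : Fin n) : 0 < pathSin n i := by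
  have hi : (i : ℝ) + 1 < n + 1 := by exact_mod_cast Nat.add_lt_add_right i.isLt 1
  apply sin_pos_of_pos_of_lt_pi (by positivity)
  calc ((i : ℝ) + 1) * (π / (n + 1)) < (n + 1) * (π / (n + 1)) := by gcongr
    _ = π := mul_div_cancel₀ _ (by positivity)

theorem pathGraph_adjMatrix_mulVec_pathSin (n : ℕ) :
    (pathGraph n).adjMatrix ℝ *ᵥ pathSin n = (2 * cos (π / (n + 1))) • pathSin n := by
  set θ := π / (n + 1)
  have hθ : (n + 1 : ℝ) * θ = π := mul_div_cancel₀ _ (by positivity)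
  have hs : pathSin n = fun i : Fin n ↦ sin ((((i : ℕ) + 1 : ℕ) : ℝ) * θ) := by
    ext i
    simp [pathSin, θ]
  ext j
  rw [hs, pathGraph_adjMatrix_mulVec_apply (fun m ↦ sin (m * θ)) (by simp) (by simp [hθ])]
  have hj : ((j : ℕ) : ℝ) * θ = (j + 1) * θ - θ := by ring
  have hj2 : (((j + 2 : ℕ)) : ℝ) * θ = (j + 1) * θ + θ := by push_cast; ring
  simp only [Pi.smul_apply, smul_eq_mul, hj, hj2, sin_sub, sin_add]
  push_cast
  ring

theorem pathGraph_adjMatrix_mulVec_pathSin_two_mul_add_one (Λ : ℕ) :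
    (pathGraph (2 * Λ + 1)).adjMatrix ℝ *ᵥ pathSin (2 * Λ + 1) =
      (2 * cos (π / (2 * Λ + 2))) • pathSin (2 * Λ + 1) := by
  rw [pathGraph_adjMatrix_mulVec_pathSin]
  push_cast
  ring_nf

theorem one_le_bcoef {k : ℝ} (hk : 0 ≤ k) (m : ℤ) : 1 ≤ bcoef k m := by
  have hm : (0 : ℝ) ≤ m * (m - 1) := by
    rcases le_or_gt m 0 with h | h
    · have : (m : ℝ) ≤ 0 := by exact_mod_cast h
      nlinarith
    · have : (1 : ℝ) ≤ m := by exact_mod_cast h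
      nlinarith
  exact one_le_sqrt.mpr (le_add_of_nonneg_right (div_nonneg hm hk))

theorem bcoef_le_bcoef {k : ℝ} (hk : 0 ≤ k) {m N : ℤ} (h₁ : 1 - N ≤ m) (h₂ : m ≤ N) :
    bcoef k m ≤ bcoef k N := by
  have h₁' : (1 : ℝ) - N ≤ m := by exact_mod_cast h₁
  have h₂' : (m : ℝ) ≤ N := by exact_mod_cast h₂
  have h : (m : ℝ) * (m - 1) ≤ N * (N - 1) := by nlinarith
  unfold bcoef
  gcongr

theorem XLam_isHermitian (Λ : ℕ) (k : ℝ) : (XLam Λ k).IsHermitian := by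
  ext i j
  simp only [conjTranspose_apply, XLam, star_trivial]
  split_ifs <;> first | rfl | omega

theorem XLam_nonneg (Λ : ℕ) (k : ℝ) (i j : Fin (2 * Λ + 1)) : 0 ≤ XLam Λ k i j := by
  unfold XLam bcoef
  split_ifs <;> positivity

theorem half_adjMatrix_le_XLam {k : ℝ} (hk : 0 ≤ k) (Λ : ℕ) (i j : Fin (2 * Λ + 1)) :
    ((1 / 2 : ℝ) • (pathGraph (2 * Λ + 1)).adjMatrix ℝ) i j ≤ XLam Λ k i j := by
  have hi := one_le_bcoef hk ((Λ : ℤ) - i)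
  have hj := one_le_bcoef hk ((Λ : ℤ) - j)
  simp only [Matrix.smul_apply, adjMatrix_apply, pathGraph_adj, XLam, smul_eq_mul]
  split_ifs <;> first | omega | linarith

theorem XLam_le_smul_adjMatrix {k : ℝ} (hk : 0 ≤ k) (Λ : ℕ) (i j : Fin (2 * Λ + 1)) :
    XLam Λ k i j ≤ ((bcoef k Λ / 2) • (pathGraph (2 * Λ + 1)).adjMatrix ℝ) i j := by
  have hi := i.isLt
  have hj := j.isLt
  simp only [Matrix.smul_apply, adjMatrix_apply, pathGraph_adj, XLam, smul_eq_mul]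
  split_ifs <;> first | omega | simp only [mul_one, mul_zero, le_refl]
  · linarith [bcoef_le_bcoef hk (m := (Λ : ℤ) - i) (N := Λ) (by omega) (by omega)]
  · linarith [bcoef_le_bcoef hk (m := (Λ : ℤ) - j) (N := Λ) (by omega) (by omega)]

theorem cos_smul_pathSin_le_XLam_mulVec {k : ℝ} (hk : 0 ≤ k) (Λ : ℕ) :
    cos (π / (2 * Λ + 2)) • pathSin (2 * Λ + 1) ≤ XLam Λ k *ᵥ pathSin (2 * Λ + 1) := by
  calc cos (π / (2 * Λ + 2)) • pathSin (2 * Λ + 1)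
      = ((1 / 2 : ℝ) • (pathGraph (2 * Λ + 1)).adjMatrix ℝ) *ᵥ pathSin (2 * Λ + 1) := by
        rw [smul_mulVec, pathGraph_adjMatrix_mulVec_pathSin_two_mul_add_one, smul_smul]
        ring_nf
    _ ≤ XLam Λ k *ᵥ pathSin (2 * Λ + 1) :=
        mulVec_le_mulVec_of_le (half_adjMatrix_le_XLam hk Λ) fun i ↦ (pathSin_pos i).le

theorem XLam_mulVec_pathSin_le {k : ℝ} (hk : 0 ≤ k) (Λ : ℕ) :
    XLam Λ k *ᵥ pathSin (2 * Λ + 1) ≤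
      (bcoef k Λ * cos (π / (2 * Λ + 2))) • pathSin (2 * Λ + 1) := by
  calc XLam Λ k *ᵥ pathSin (2 * Λ + 1)
      ≤ ((bcoef k Λ / 2) • (pathGraph (2 * Λ + 1)).adjMatrix ℝ) *ᵥ pathSin (2 * Λ + 1) :=
        mulVec_le_mulVec_of_le (XLam_le_smul_adjMatrix hk Λ) fun i ↦ (pathSin_pos i).le
    _ = (bcoef k Λ * cos (π / (2 * Λ + 2))) • pathSin (2 * Λ + 1) := by
        rw [smul_mulVec, pathGraph_adjMatrix_mulVec_pathSin_two_mul_add_one, smul_smul]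
        ring_nf

theorem stmt_8_general (Λ : ℕ) (k : ℝ) (hk : (Λ : ℝ)^2 * ((Λ : ℝ) + 1)^2 ≤ k)
    (α₁ : ℝ)
    (hα₁ : IsGreatest {α : ℝ | Module.End.HasEigenvalue (Matrix.toLin' (XLam Λ k)) α} α₁) :
    Real.cos (Real.pi / (2 * Λ + 2)) ≤ α₁ ∧
      α₁ ≤ Real.sqrt (1 + (Λ : ℝ) * ((Λ : ℝ) - 1) / k) * Real.cos (Real.pi / (2 * Λ + 2)) := by
  have hk₀ : 0 ≤ k := (by positivity : (0 : ℝ) ≤ Λ ^ 2 * (Λ + 1) ^ 2).trans hk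
  have hw : pathSin (2 * Λ + 1) ≠ 0 := Function.ne_iff.mpr ⟨0, (pathSin_pos 0).ne'⟩
  obtain ⟨μ, hμ, hcμ⟩ := (XLam_isHermitian Λ k).exists_hasEigenvalue_ge_of_smul_le_mulVec
    (fun i ↦ (pathSin_pos i).le) hw (cos_smul_pathSin_le_XLam_mulVec hk₀ Λ)
  have hup := abs_le_of_hasEigenvalue_of_mulVec_le (XLam_nonneg Λ k) pathSin_pos
    (XLam_mulVec_pathSin_le hk₀ Λ) hα₁.1
  have hbΛ : bcoef k Λ = √(1 + Λ * (Λ - 1) / k) := by simp [bcoef]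
  exact ⟨hcμ.trans (hα₁.2 hμ), hbΛ ▸ (le_abs_self α₁).trans hup⟩

theorem stmt_8 (Λ : ℕ) (hΛ : 0 < Λ) (k : ℝ) (hk : (Λ : ℝ)^2 * ((Λ : ℝ) + 1)^2 ≤ k)
    (α₁ : ℝ)
    (hα₁ : IsGreatest {α : ℝ | Module.End.HasEigenvalue (Matrix.toLin' (XLam Λ k)) α} α₁) :
    Real.cos (Real.pi / (2 * Λ + 2)) ≤ α₁ ∧
      α₁ ≤ Real.sqrt (1 + (Λ : ℝ) * ((Λ : ℝ) - 1) / k) * Real.cos (Real.pi / (2 * Λ + 2)) :=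
  stmt_8_general Λ k hk α₁ hα₁
end

section
/- For every integer Λ ≥ 1 one has the inequality √(1 + Λ(Λ−1)/k)·cos(π/(2Λ+2)) ≤ cos(π/(2Λ+4)) whenever k ≥ Λ(Λ−1)(2Λ+2)²(2Λ+3)²(2Λ+4)²/(4π⁴). -/
set_option maxHeartbeats 1000000 in
theorem stmt_11 (Λ : ℕ) (hΛ : 1 ≤ Λ) (k : ℝ) (hk0 : 0 < k)
    (hk : (Λ : ℝ) * ((Λ : ℝ) - 1) * (2 * (Λ : ℝ) + 2) ^ 2 * (2 * (Λ : ℝ) + 3) ^ 2 *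
        (2 * (Λ : ℝ) + 4) ^ 2 / (4 * Real.pi ^ 4) ≤ k) :
    Real.sqrt (1 + (Λ : ℝ) * ((Λ : ℝ) - 1) / k) * Real.cos (Real.pi / (2 * (Λ : ℝ) + 2)) ≤
      Real.cos (Real.pi / (2 * (Λ : ℝ) + 4)) := by
  have hπ := Real.pi_pos
  set x : ℝ := (Λ : ℝ) with hxdef
  have hx : (1:ℝ) ≤ x := Nat.one_le_cast.mpr hΛ
  have h2 : (0:ℝ) < 2*x+2 := by linarith
  have h3 : (0:ℝ) < 2*x+3 := by linarith
  have h4 : (0:ℝ) < 2*x+4 := by linarith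
  set a : ℝ := Real.pi/(2*x+2) with hadef
  set b : ℝ := Real.pi/(2*x+4) with hbdef
  have ha_pos : 0 < a := div_pos hπ h2
  have hb_pos : 0 < b := div_pos hπ h4
  have ha_le : a ≤ Real.pi/4 := by
    rw [hadef]; gcongr <;> linarith
  have hb_le : b ≤ Real.pi/4 := by
    rw [hbdef]; gcongr <;> linarith
  have hba : b ≤ a := by
    rw [hadef, hbdef]; gcongr <;> linarith
  have hcosa : 0 < Real.cos a := by
    apply Real.cos_pos_of_mem_Ioo; constructor <;> [linarith; linarith [Real.pi_gt_three]]
  have hcosb : 0 < Real.cos b := by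
    apply Real.cos_pos_of_mem_Ioo; constructor <;> [linarith; linarith [Real.pi_gt_three]]
  have hc : (0:ℝ) ≤ x*(x-1) := by nlinarith
  have ht0 : (0:ℝ) ≤ x*(x-1)/k := div_nonneg hc hk0.le
  -- bound on t = c/k
  have hMpos : (0:ℝ) < (2*x+2)^2*(2*x+3)^2*(2*x+4)^2 := by positivity
  have hck : x*(x-1)/k ≤ 4*Real.pi^4/((2*x+2)^2*(2*x+3)^2*(2*x+4)^2) := by
    rw [div_le_div_iff₀ hk0 hMpos]
    have h1 : x*(x-1)*(2*x+2)^2*(2*x+3)^2*(2*x+4)^2 ≤ k * (4*Real.pi^4) :=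
      (div_le_iff₀ (by positivity)).mp hk
    nlinarith [h1]
  -- the sine product identity
  have hid : Real.sin (a+b) * Real.sin (a-b) = Real.cos b ^ 2 - Real.cos a ^ 2 := by
    rw [Real.sin_add, Real.sin_sub]
    linear_combination Real.cos b ^ 2 * Real.sin_sq_add_cos_sq a -
      Real.cos a ^ 2 * Real.sin_sq_add_cos_sq b
  -- sine lower bounds
  have hs1 : 2/Real.pi*(a+b) ≤ Real.sin (a+b) :=
    Real.mul_le_sin (by linarith) (by linarith)
  have hs2 : 2/Real.pi*(a-b) ≤ Real.sin (a-b) :=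
    Real.mul_le_sin (by linarith) (by linarith)
  have hprod : 2/Real.pi*(a+b) * (2/Real.pi*(a-b)) ≤ Real.sin (a+b) * Real.sin (a-b) := by
    have hnn : (0:ℝ) ≤ 2/Real.pi*(a-b) := mul_nonneg (by positivity) (by linarith)
    have hnn1 : (0:ℝ) ≤ 2/Real.pi*(a+b) := by positivity
    exact mul_le_mul hs1 hs2 hnn (le_trans hnn1 hs1)
  -- compute (a+b)(a-b)
  have hab2 : (a+b)*(a-b) = Real.pi^2*(8*x+12)/((2*x+2)^2*(2*x+4)^2) := by
    rw [hadef, hbdef]; field_simp; ring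
  -- key squared inequality
  have hkey : (1 + x*(x-1)/k) * Real.cos a ^ 2 ≤ Real.cos b ^ 2 := by
    have hcos1 : Real.cos a ^ 2 ≤ 1 := by nlinarith [Real.cos_le_one a]
    have hT : x*(x-1)/k * Real.cos a ^ 2 ≤ 4*Real.pi^4/((2*x+2)^2*(2*x+3)^2*(2*x+4)^2) := by
      calc x*(x-1)/k * Real.cos a ^ 2 ≤ x*(x-1)/k * 1 := by
            apply mul_le_mul_of_nonneg_left hcos1 ht0
        _ = x*(x-1)/k := by ring
        _ ≤ _ := hck
    have hlow : 4*(8*x+12)/((2*x+2)^2*(2*x+4)^2) ≤ Real.sin (a+b) * Real.sin (a-b) := by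
      refine le_trans (le_of_eq ?_) hprod
      have he1 : 2/Real.pi*(a+b) * (2/Real.pi*(a-b)) = 4/Real.pi^2 * ((a+b)*(a-b)) := by
        ring
      rw [he1, hab2]
      field_simp
    have hcmp : 4*Real.pi^4/((2*x+2)^2*(2*x+3)^2*(2*x+4)^2)
        ≤ 4*(8*x+12)/((2*x+2)^2*(2*x+4)^2) := by
      have hπ2 : Real.pi^2 ≤ 10 := by nlinarith [Real.pi_lt_d2, hπ]
      have hπ4 : Real.pi^4 ≤ 100 := by nlinarith [hπ2, hπ]
      have hkey2 : 4*Real.pi^4 ≤ 4*((8*x+12)*(2*x+3)^2) := by nlinarith [hπ4, hx]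
      have he2 : 4*(8*x+12)/((2*x+2)^2*(2*x+4)^2)
          = 4*((8*x+12)*(2*x+3)^2)/((2*x+2)^2*(2*x+3)^2*(2*x+4)^2) := by
        rw [div_eq_div_iff (by positivity) hMpos.ne']; ring
      rw [he2]
      exact (div_le_div_iff_of_pos_right hMpos).mpr hkey2
    have h5 : x*(x-1)/k * Real.cos a ^ 2 ≤ Real.cos b ^ 2 - Real.cos a ^ 2 := by
      linarith [hT, hcmp, hlow, hid]
    calc (1 + x*(x-1)/k) * Real.cos a ^ 2
        = Real.cos a ^ 2 + x*(x-1)/k * Real.cos a ^ 2 := by ring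
      _ ≤ Real.cos a ^ 2 + (Real.cos b ^ 2 - Real.cos a ^ 2) := by linarith
      _ = Real.cos b ^ 2 := by ring
  -- conclude via sqrt
  have h1ck : (0:ℝ) ≤ 1 + x*(x-1)/k := by linarith
  calc Real.sqrt (1 + x*(x-1)/k) * Real.cos a
      = Real.sqrt ((1 + x*(x-1)/k) * Real.cos a ^ 2) := by
        rw [Real.sqrt_mul h1ck, Real.sqrt_sq hcosa.le]
    _ ≤ Real.sqrt (Real.cos b ^ 2) := Real.sqrt_le_sqrt hkey
    _ = Real.cos b := Real.sqrt_sq hcosb.le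
end
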